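/- arXiv:1608.08246 — 2 statements merged into one kernel-verified Lean document; each statement's English description precedes it below -/
import Mathlib

section
/- Let μ be a non-atomic Borel probability measure on the Cantor space Ω. Then there exists ω ∈ Ω such that for every k ∈ ℕ: μ([ω|k]) > 0 and μ([ω|(k+1)]) > μ([ω|k])/3, and moreover μ([ω|k]) → 0 as k → ∞. -/
open MeasureTheory Filter
open scoped ENNReal

/-- The cylinder `[x]` of a finite binary string `x` in the Cantor space `ℕ → Bool`:
the set of infinite sequences extending `x`. -/
def cyl (x : List Bool) : Set (ℕ → Bool) :=
  {ω | ∀ i : ℕ, (h : i < x.length) → ω i = x.get ⟨i, h⟩}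

/-- `seg ω n` is the string formed by the first `n` bits of `ω`. -/
def seg (ω : ℕ → Bool) (n : ℕ) : List Bool :=
  List.ofFn (fun i : Fin n => ω i)

lemma mem_cyl_seg {τ ω : ℕ → Bool} {k : ℕ} : τ ∈ cyl (seg ω k) ↔ ∀ i < k, τ i = ω i := by
  constructor
  · intro h i hi
    have := h i (by simpa [seg] using hi)
    simpa [seg] using this
  · intro h i hi
    have hi' : i < k := by simpa [seg] using hi
    simpa [seg] using h i hi'

lemma mem_cyl_append {x : List Bool} {c : Bool} {τ : ℕ → Bool} :
    τ ∈ cyl (x ++ [c]) ↔ τ ∈ cyl x ∧ τ x.length = c := by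
  unfold cyl
  simp only [Set.mem_setOf_eq, List.length_append, List.length_singleton]
  constructor
  · intro h
    refine ⟨fun i hi => ?_, ?_⟩
    · have := h i (by omega)
      simpa [List.getElem_append, hi] using this
    · have := h x.length (by omega)
      simpa [List.getElem_append] using this
  · rintro ⟨h1, h2⟩ i hi
    rcases lt_or_eq_of_le (Nat.lt_succ_iff.mp hi) with hlt | heq
    · simpa [List.getElem_append, hlt] using h1 i hlt
    · subst heq
      simpa [List.getElem_append] using h2

lemma measurableSet_cyl (x : List Bool) : MeasurableSet (cyl x) := by
  have : cyl x = ⋂ i : Fin x.length, {ω : ℕ → Bool | ω i = x.get i} := by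
    ext ω
    simp only [cyl, Set.mem_setOf_eq, Set.mem_iInter]
    exact ⟨fun h i => h i i.2, fun h i hi => h ⟨i, hi⟩⟩
  rw [this]
  exact MeasurableSet.iInter fun i =>
    (measurable_pi_apply (i : ℕ)) (measurableSet_singleton _)

/-- branch construction from the proof of Theorem 1. For a non-atomic
Borel probability measure `μ` on the Cantor space there is a sequence `ω` all of whose
prefixes have positive measure, with `μ([ω|(k+1)]) > μ([ω|k]) / 3` at every step, and
`μ([ω|k]) → 0`. -/
theorem stmt8 (μ : Measure (ℕ → Bool)) [IsProbabilityMeasure μ]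
    (hna : ∀ ω : ℕ → Bool, μ {ω} = 0) :
    ∃ ω : ℕ → Bool,
      (∀ k : ℕ, 0 < μ (cyl (seg ω k)) ∧
        μ (cyl (seg ω k)) / 3 < μ (cyl (seg ω (k + 1)))) ∧
      Tendsto (fun k => μ (cyl (seg ω k))) atTop (nhds 0) := by
  classical
  -- choose the heavier child at each node
  set b : List Bool → Bool := fun x =>
    if μ (cyl (x ++ [false])) ≤ μ (cyl (x ++ [true])) then true else false with hb
  have hbmax : ∀ x : List Bool, μ (cyl x) / 2 ≤ μ (cyl (x ++ [b x])) := by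
    intro x
    have hsplit : μ (cyl x) ≤ μ (cyl (x ++ [true])) + μ (cyl (x ++ [false])) := by
      have hsub : cyl x ⊆ cyl (x ++ [true]) ∪ cyl (x ++ [false]) := by
        intro τ hτ
        rcases Bool.eq_false_or_eq_true (τ x.length) with h | h
        · exact Or.inl (mem_cyl_append.mpr ⟨hτ, h⟩)
        · exact Or.inr (mem_cyl_append.mpr ⟨hτ, h⟩)
      exact le_trans (measure_mono hsub) (measure_union_le _ _)
    have hmax : μ (cyl x) ≤ 2 * μ (cyl (x ++ [b x])) := by
      by_cases h : μ (cyl (x ++ [false])) ≤ μ (cyl (x ++ [true]))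
      · have : b x = true := by simp [hb, h]
        rw [this, two_mul]
        exact le_trans hsplit (add_le_add le_rfl h)
      · have : b x = false := by simp [hb, h]
        rw [this, two_mul]
        exact le_trans hsplit (add_le_add (le_of_lt (not_le.mp h)) le_rfl)
    rw [ENNReal.div_le_iff_le_mul (by norm_num) (by norm_num)]
    rwa [mul_comm] at hmax
  -- define the branch
  let F : ℕ → List Bool := fun n => Nat.rec [] (fun _ xs => xs ++ [b xs]) n
  have hF0 : F 0 = [] := rfl
  have hFsucc : ∀ n, F (n + 1) = F n ++ [b (F n)] := fun n => rfl
  set ω : ℕ → Bool := fun n => b (F n) with hω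
  have hseg : ∀ k, seg ω k = F k := by
    intro k
    induction k with
    | zero => simp [seg, hF0]
    | succ n ih =>
      rw [hFsucc]
      have : seg ω (n + 1) = seg ω n ++ [ω n] := by
        simp only [seg, List.ofFn_succ', List.concat_eq_append, Fin.coe_castSucc,
          Fin.val_last]
      rw [this, ih]
  have hpos : ∀ k, 0 < μ (cyl (seg ω k)) := by
    intro k
    induction k with
    | zero =>
      have : cyl (seg ω 0) = Set.univ := by
        ext τ; simp [mem_cyl_seg]
      rw [this, measure_univ]; norm_num
    | succ n ih =>
      have h1 := hbmax (F n)
      rw [hseg] at ih ⊢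
      rw [hFsucc]
      calc (0 : ℝ≥0∞) < μ (cyl (F n)) / 2 :=
            ENNReal.div_pos (ne_of_gt ih) (by norm_num)
        _ ≤ _ := h1
  have hlt : ∀ k, μ (cyl (seg ω k)) / 3 < μ (cyl (seg ω (k + 1))) := by
    intro k
    have hne : μ (cyl (seg ω k)) ≠ 0 := ne_of_gt (hpos k)
    have hfin : μ (cyl (seg ω k)) ≠ ∞ := measure_ne_top μ _
    have h32 : μ (cyl (seg ω k)) / 3 < μ (cyl (seg ω k)) / 2 := by
      rw [div_eq_mul_inv, div_eq_mul_inv]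
      exact (ENNReal.mul_lt_mul_iff_right hne hfin).mpr (by
        rw [ENNReal.inv_lt_inv]; norm_num)
    calc μ (cyl (seg ω k)) / 3 < μ (cyl (seg ω k)) / 2 := h32
      _ ≤ μ (cyl (seg ω (k + 1))) := by
          rw [hseg, hseg, hFsucc]; exact hbmax (F k)
  refine ⟨ω, fun k => ⟨hpos k, hlt k⟩, ?_⟩
  have hinter : ⋂ k, cyl (seg ω k) = {ω} := by
    ext τ
    simp only [Set.mem_iInter, Set.mem_singleton_iff]
    constructor
    · intro h
      funext n
      exact mem_cyl_seg.mp (h (n + 1)) n (Nat.lt_succ_self n)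
    · rintro rfl k
      exact mem_cyl_seg.mpr fun i _ => rfl
  have hanti : Antitone fun k => cyl (seg ω k) := by
    refine antitone_nat_of_succ_le fun n => ?_
    intro τ hτ
    exact mem_cyl_seg.mpr fun i hi => mem_cyl_seg.mp hτ i (Nat.lt_succ_of_lt hi)
  have := tendsto_measure_iInter_atTop (μ := μ)
    (fun k => (measurableSet_cyl (seg ω k)).nullMeasurableSet) hanti
    ⟨0, measure_ne_top μ _⟩
  rw [hinter, hna ω] at this
  exact this
end

section
/- Let μ be the uniform Borel probability measure on the Cantor space Ω, i.e. the measure with μ([x]) = 2^{−|x|} for every finite binary string x. Define g : Ω → [0,∞) by g(ω) = ∑_{k=1}^∞ 2^{2k−1} · 𝟙[the first 2k bits of ω are k zeros followed by k ones]. Then: (i) g is probability bounded with respect to μ; and (ii) for every semimeasure bound a and every real c > 0 there exists ω ∈ Ω with g(ω) > 2 and sup_{n ∈ ℕ} 2^n · a(ω|n) < c · g(ω)/log g(ω). -/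
open MeasureTheory Filter
open scoped ENNReal

/-- A set of strings is prefix-free if no element is a proper prefix of another. -/
def PrefixFree (S : Set (List Bool)) : Prop :=
  ∀ x ∈ S, ∀ y ∈ S, x <+: y → x = y

/-- A nonnegative function on strings is a semimeasure bound if its sum over
every prefix-free set of strings is at most `1`. -/
def IsSemimeasureBound (a : List Bool → ℝ) : Prop :=
  (∀ x, 0 ≤ a x) ∧
  ∀ S : Set (List Bool), PrefixFree S → ∑' x : S, ENNReal.ofReal (a x.1) ≤ 1

/-- The test function of the uniform case of Theorem 2:
`g(ω) = ∑_{k ≥ 1} 2^(2k−1) · 𝟙[ω starts with k zeros followed by k ones]`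
(here the summation index is shifted, `k + 1` playing the role of `k`). -/
noncomputable def gU (ω : ℕ → Bool) : ℝ :=
  ∑' k : ℕ,
    Set.indicator
      {ω' : ℕ → Bool | seg ω' (2 * (k + 1)) =
        List.replicate (k + 1) false ++ List.replicate (k + 1) true}
      (fun _ => (2 : ℝ) ^ (2 * (k + 1) - 1)) ω

def pat (k : ℕ) : List Bool := List.replicate k false ++ List.replicate k true

@[simp] lemma pat_length (k : ℕ) : (pat k).length = 2*k := by
  simp [pat]; ring

@[simp] lemma seg_length (ω : ℕ → Bool) (n : ℕ) : (seg ω n).length = n := by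
  simp [seg]

lemma seg_getElem (ω : ℕ → Bool) (n i : ℕ) (h : i < (seg ω n).length) :
    (seg ω n)[i] = ω i := by
  simp [seg]

lemma pat_getElem_low {k i : ℕ} (h : i < k) (h2 : i < (pat k).length) :
    (pat k)[i] = false := by
  unfold pat at h2 ⊢
  rw [List.getElem_append_left (by simpa using h)]
  simp

lemma pat_getElem_high {k i : ℕ} (h : k ≤ i) (h2 : i < (pat k).length) :
    (pat k)[i] = true := by
  have h2' : i < 2*k := by simpa using h2
  unfold pat at h2 ⊢
  rw [List.getElem_append_right (by simpa using h)]
  simp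

lemma mem_cyl_iff (ω : ℕ → Bool) (x : List Bool) : ω ∈ cyl x ↔ seg ω x.length = x := by
  constructor
  · intro h
    apply List.ext_getElem (by simp)
    intro i h1 h2
    rw [seg_getElem]
    simpa [List.get_eq_getElem] using (h i h2)
  · intro h i hi
    have := seg_getElem ω x.length i (by simpa using hi)
    simp only [h] at this
    simp [List.get_eq_getElem, ← this]

/-- The cylinder set of `pat k` as it appears in `gU`. -/
def Ck (k : ℕ) : Set (ℕ → Bool) := {ω | seg ω (2*k) = pat k}

lemma Ck_eq_cyl (k : ℕ) : Ck k = cyl (pat k) := by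
  ext ω
  show seg ω (2*k) = pat k ↔ _
  rw [mem_cyl_iff, pat_length]

lemma mem_Ck_bit {ω : ℕ → Bool} {k : ℕ} (h : ω ∈ Ck k) {i : ℕ} (hi : i < 2*k) :
    ω i = (pat k)[i]'(by simpa using hi) := by
  have := seg_getElem ω (2*k) i (by simpa using hi)
  simp only [show seg ω (2*k) = pat k from h] at this
  exact this.symm

lemma mem_Ck_low {ω : ℕ → Bool} {k : ℕ} (h : ω ∈ Ck k) {i : ℕ} (hi : i < k) :
    ω i = false := by
  rw [mem_Ck_bit h (by omega), pat_getElem_low hi]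

lemma mem_Ck_mid {ω : ℕ → Bool} {k : ℕ} (h : ω ∈ Ck k) {i : ℕ} (hi : k ≤ i) (hi2 : i < 2*k) :
    ω i = true := by
  rw [mem_Ck_bit h hi2, pat_getElem_high hi]

lemma Ck_disj {ω : ℕ → Bool} {j k : ℕ} (hj : 1 ≤ j) (hjk : j < k)
    (h1 : ω ∈ Ck j) (h2 : ω ∈ Ck k) : False := by
  have t1 : ω j = true := mem_Ck_mid h1 le_rfl (by omega)
  have t2 : ω j = false := mem_Ck_low h2 hjk
  rw [t1] at t2; exact Bool.noConfusion t2

lemma gU_def (ω : ℕ → Bool) : gU ω =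
    ∑' k : ℕ, Set.indicator (Ck (k+1)) (fun _ => (2 : ℝ) ^ (2 * (k + 1) - 1)) ω := rfl

lemma gU_eq_of_mem {ω : ℕ → Bool} {k : ℕ} (h : ω ∈ Ck (k+1)) :
    gU ω = 2 ^ (2*(k+1) - 1) := by
  rw [gU_def]
  rw [tsum_eq_single k]
  · simp [Set.indicator_of_mem h]
  · intro j hj
    apply Set.indicator_of_notMem
    intro hmem
    rcases Nat.lt_or_ge j k with hlt | hge
    · exact Ck_disj (by omega) (by omega) hmem h
    · exact Ck_disj (by omega) (by omega) h hmem

lemma gU_eq_zero {ω : ℕ → Bool} (h : ∀ k : ℕ, ω ∉ Ck (k+1)) : gU ω = 0 := by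
  rw [gU_def]
  have : ∀ k : ℕ, Set.indicator (Ck (k+1)) (fun _ => (2 : ℝ) ^ (2 * (k + 1) - 1)) ω = 0 :=
    fun k => Set.indicator_of_notMem (h k) _
  simp [this]

lemma seg_prefix (ω : ℕ → Bool) {m n : ℕ} (h : m ≤ n) : seg ω m <+: seg ω n := by
  rw [List.prefix_iff_eq_take]
  apply List.ext_getElem (by simp [h]) 
  intro i h1 h2
  rw [seg_getElem, List.getElem_take, seg_getElem]

lemma cyl_anti {x y : List Bool} (h : y <+: x) : cyl x ⊆ cyl y := by
  intro ω hω i hi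
  have hlen : y.length ≤ x.length := h.length_le
  have := hω i (by omega)
  simp only [List.get_eq_getElem] at this ⊢
  rw [this, h.getElem hi]

lemma exists_minimal_prefix (S : Set (List Bool)) :
    ∀ x ∈ S, ∃ y ∈ S, y <+: x ∧ ∀ z ∈ S, z <+: y → z = y := by
  have : ∀ (n : ℕ), ∀ x ∈ S, x.length ≤ n → ∃ y ∈ S, y <+: x ∧ ∀ z ∈ S, z <+: y → z = y := by
    intro n
    induction n with
    | zero =>
      intro x hx hlen
      refine ⟨x, hx, List.prefix_refl x, fun z hz hzx => ?_⟩
      have := hzx.length_le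
      exact List.IsPrefix.eq_of_length hzx (by omega)
    | succ n ih =>
      intro x hx hlen
      by_cases hmin : ∀ z ∈ S, z <+: x → z = x
      · exact ⟨x, hx, List.prefix_refl x, hmin⟩
      · push_neg at hmin
        obtain ⟨z, hz, hzx, hne⟩ := hmin
        have hlt : z.length < x.length :=
          lt_of_le_of_ne hzx.length_le (fun he => hne (List.IsPrefix.eq_of_length hzx he))
        obtain ⟨y, hy, hyz, hymin⟩ := ih z hz (by omega)
        exact ⟨y, hy, hyz.trans hzx, hymin⟩
  exact fun x hx => this x.length x hx le_rfl

lemma ofReal_half_pow (m : ℕ) : ENNReal.ofReal ((1/2 : ℝ)^m) = (2⁻¹ : ℝ≥0∞)^m := by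
  rw [ENNReal.ofReal_pow (by norm_num)]
  congr 1
  rw [one_div, ENNReal.ofReal_inv_of_pos (by norm_num)]
  norm_num

lemma partI (μ : Measure (ℕ → Bool)) [IsProbabilityMeasure μ]
    (huniform : ∀ x : List Bool, μ (cyl x) = (2 : ℝ≥0∞)⁻¹ ^ x.length) :
    ∀ C : ℝ, 0 < C → μ {ω | C < gU ω} ≤ ENNReal.ofReal (1 / C) := by
  intro C hC
  have hex : ∃ t : ℕ, C < 2^(2*t+1) := by
    obtain ⟨n, hn⟩ := pow_unbounded_of_one_lt C (one_lt_two : (1:ℝ) < 2)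
    exact ⟨n, hn.trans_le (pow_le_pow_right₀ (by norm_num) (by omega))⟩
  set k0 := Nat.find hex with hk0
  have hk0p : C < 2^(2*k0+1) := Nat.find_spec hex
  have hsub : {ω | C < gU ω} ⊆ ⋃ j : ℕ, Ck (k0 + j + 1) := by
    intro ω hω
    simp only [Set.mem_setOf_eq] at hω
    by_cases hall : ∀ t : ℕ, ω ∉ Ck (t+1)
    · rw [gU_eq_zero hall] at hω; linarith
    · push_neg at hall
      obtain ⟨t, ht⟩ := hall
      rw [gU_eq_of_mem ht] at hω
      have htk : k0 ≤ t := Nat.find_min' hex (by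
        have : 2*(t+1)-1 = 2*t+1 := by omega
        rwa [this] at hω)
      refine Set.mem_iUnion.2 ⟨t - k0, ?_⟩
      have : k0 + (t - k0) + 1 = t + 1 := by omega
      rw [this]; exact ht
  calc μ {ω | C < gU ω} ≤ μ (⋃ j : ℕ, Ck (k0 + j + 1)) := measure_mono hsub
    _ ≤ ∑' j : ℕ, μ (Ck (k0 + j + 1)) := measure_iUnion_le _
    _ = ∑' j : ℕ, (2⁻¹ : ℝ≥0∞)^(2*(k0+j+1)) := by
        congr 1; funext j; rw [Ck_eq_cyl, huniform, pat_length]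
    _ ≤ ∑' j : ℕ, (2⁻¹ : ℝ≥0∞)^(2*k0+2) * (2⁻¹)^j := by
        apply ENNReal.tsum_le_tsum
        intro j
        rw [← pow_add]
        exact pow_le_pow_right_of_le_one' (by simp) (by omega)
    _ = (2⁻¹ : ℝ≥0∞)^(2*k0+2) * ∑' j : ℕ, (2⁻¹ : ℝ≥0∞)^j := ENNReal.tsum_mul_left
    _ = (2⁻¹ : ℝ≥0∞)^(2*k0+2) * 2 := by
        rw [ENNReal.tsum_geometric, ENNReal.one_sub_inv_two, inv_inv]
    _ = (2⁻¹ : ℝ≥0∞)^(2*k0+1) := by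
        rw [pow_succ, mul_assoc, ENNReal.inv_mul_cancel two_ne_zero ENNReal.ofNat_ne_top, mul_one]
    _ ≤ ENNReal.ofReal (1 / C) := by
        rw [← ofReal_half_pow]
        apply ENNReal.ofReal_le_ofReal
        rw [div_pow, one_pow]
        apply one_div_le_one_div_of_le hC hk0p.le

def pat1 (k : ℕ) : List Bool := List.replicate k false ++ [true]

@[simp] lemma pat1_length (k : ℕ) : (pat1 k).length = k + 1 := by simp [pat1]

lemma pat1_getElem_low {k i : ℕ} (h : i < k) (h2 : i < (pat1 k).length) :
    (pat1 k)[i] = false := by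
  unfold pat1 at h2 ⊢
  rw [List.getElem_append_left (by simpa using h)]
  simp

lemma pat1_getElem_high {k : ℕ} (h2 : k < (pat1 k).length) :
    (pat1 k)[k] = true := by
  unfold pat1 at h2 ⊢
  rw [List.getElem_append_right (by simp)]
  simp

lemma pat1_prefix_seg {ω : ℕ → Bool} {k n : ℕ} (hω : ω ∈ Ck k) (hk : 1 ≤ k)
    (hn : k < n) : pat1 k <+: seg ω n := by
  rw [List.prefix_iff_eq_take]
  apply List.ext_getElem (by simp; omega)
  intro i h1 h2
  rw [List.getElem_take, seg_getElem]
  rcases Nat.lt_or_ge i k with hik | hik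
  · rw [pat1_getElem_low hik, mem_Ck_low hω hik]
  · have hik' : i = k := by simp at h1; omega
    subst hik'
    rw [pat1_getElem_high h1, mem_Ck_mid hω le_rfl (by omega)]

lemma pat1_prefix_pat {k : ℕ} (hk : 1 ≤ k) : pat1 k <+: pat k := by
  rw [List.prefix_iff_eq_take]
  apply List.ext_getElem (by simp; omega)
  intro i h1 h2
  rw [List.getElem_take]
  rcases Nat.lt_or_ge i k with hik | hik
  · rw [pat1_getElem_low hik, pat_getElem_low hik]
  · have hik' : i = k := by simp at h1; omega
    subst hik'
    rw [pat1_getElem_high h1, pat_getElem_high le_rfl]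

lemma pat1_unique {j k : ℕ} {z : List Bool} (h1 : pat1 j <+: z) (h2 : pat1 k <+: z) :
    j = k := by
  by_contra hne
  wlog hjk : j < k generalizing j k
  · exact this h2 h1 (Ne.symm hne) (by omega)
  have hj : z[j]'(by have := h1.length_le; simp at this; omega) = true := by
    rw [← h1.getElem (by simp)]
    exact pat1_getElem_high (by simp)
  have hk : z[j]'(by have := h1.length_le; simp at this; omega) = false := by
    rw [← h2.getElem (by simp; omega)]
    exact pat1_getElem_low hjk (by simp; omega)
  rw [hj] at hk; exact Bool.noConfusion hk

/-- canonical element of `Ck k` -/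
def ωfun (k : ℕ) : ℕ → Bool := fun i => decide (k ≤ i ∧ i < 2*k)

lemma ωfun_mem (k : ℕ) : ωfun k ∈ Ck k := by
  show seg _ _ = _
  apply List.ext_getElem (by simp)
  intro i h1 h2
  rw [seg_getElem]
  rcases Nat.lt_or_ge i k with hik | hik
  · rw [pat_getElem_low hik]
    simp [ωfun]; omega
  · rw [pat_getElem_high hik]
    simp only [seg_length] at h1
    simp [ωfun]; omega

lemma seg_eq_of_agree {ω ω' : ℕ → Bool} {k n : ℕ} (h : ω ∈ Ck k) (h' : ω' ∈ Ck k)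
    (hn : n ≤ 2*k) : seg ω n = seg ω' n := by
  apply List.ext_getElem (by simp)
  intro i h1 h2
  simp only [seg_length] at h1
  rw [seg_getElem, seg_getElem, mem_Ck_bit h (by omega), mem_Ck_bit h' (by omega)]

lemma a_le_one {a : List Bool → ℝ} (ha : IsSemimeasureBound a) (x : List Bool) : a x ≤ 1 := by
  have hpf : PrefixFree {x} := by
    intro u hu v hv _
    simp only [Set.mem_singleton_iff] at hu hv
    rw [hu, hv]
  have := ha.2 {x} hpf
  rw [show (∑' (x_1 : ↑({x} : Set (List Bool))), ENNReal.ofReal (a ↑x_1))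
      = ENNReal.ofReal (a x) from tsum_singleton x (fun y => ENNReal.ofReal (a y))] at this
  exact (ENNReal.ofReal_le_one).1 this

noncomputable def Bc (c : ℝ) (k : ℕ) : ℝ := c * 2^(2*k-1) / ((2*k-1 : ℕ) : ℝ) / 2

lemma Bc_pos {c : ℝ} (hc : 0 < c) {k : ℕ} (hk : 1 ≤ k) : 0 < Bc c k := by
  apply div_pos (div_pos (by positivity) _) two_pos
  have : (1:ℕ) ≤ 2*k-1 := by omega
  exact_mod_cast Nat.lt_of_lt_of_le Nat.zero_lt_one this

lemma Bc_lt_T {c : ℝ} (hc : 0 < c) {k : ℕ} (hk : 1 ≤ k) :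
    Bc c k < c * 2^(2*k-1) / ((2*k-1 : ℕ) : ℝ) := by
  have h := Bc_pos hc hk
  unfold Bc at h ⊢
  linarith

lemma Bc_tail {c : ℝ} (hc : 0 < c) {k : ℕ} (hk : 2 ≤ k) :
    c / (8*((k:ℝ)+1)) ≤ Bc c k * (1/2)^(2*k) := by
  obtain ⟨m, rfl⟩ : ∃ m, k = m + 2 := ⟨k - 2, by omega⟩
  have h1 : 2*(m+2)-1 = 2*m+3 := by omega
  rw [Bc, h1]
  push_cast
  have h5 : c * 2 ^ (2 * m + 3) / (2 * (m:ℝ) + 3) / 2 * ((1:ℝ) / 2) ^ (2 * (m + 2))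
      = c / ((2 * (m:ℝ) + 3) * 4) := by
    rw [div_pow, one_pow]
    have e1 : (2:ℝ) ^ (2 * (m + 2)) = 2 ^ (2*m+3) * 2 := by
      rw [show 2*(m+2) = (2*m+3)+1 from by ring, pow_succ]
    rw [e1]
    have hg : (0:ℝ) < 2^(2*m+3) := by positivity
    field_simp
    ring
  rw [h5, div_le_div_iff₀ (by positivity) (by positivity)]
  nlinarith [hc.le]

lemma gU_eq_of_mem' {ω : ℕ → Bool} {k : ℕ} (hk : 1 ≤ k) (h : ω ∈ Ck k) :
    gU ω = 2 ^ (2*k - 1) := by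
  obtain ⟨t, rfl⟩ : ∃ t, k = t + 1 := ⟨k - 1, by omega⟩
  exact gU_eq_of_mem h

lemma two_lt_gU {ω : ℕ → Bool} {k : ℕ} (hk : 2 ≤ k) (h : ω ∈ Ck k) : 2 < gU ω := by
  rw [gU_eq_of_mem' (by omega) h]
  calc (2:ℝ) = 2^1 := (pow_one 2).symm
    _ < 2^(2*k-1) := by
        apply pow_lt_pow_right₀ one_lt_two
        omega

lemma rhs_eq {ω : ℕ → Bool} {k : ℕ} (hk : 1 ≤ k) (h : ω ∈ Ck k) (c : ℝ) :
    c * gU ω / Real.logb 2 (gU ω) = c * 2^(2*k-1) / ((2*k-1 : ℕ) : ℝ) := by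
  rw [gU_eq_of_mem' hk h]
  congr 1
  rw [Real.logb_pow, Real.logb_self_eq_one (by norm_num), mul_one]

lemma exists_K1 {c : ℝ} (hc : 0 < c) : ∃ K1 : ℕ, 2 ≤ K1 ∧ ∀ k, K1 ≤ k → (2:ℝ)^k ≤ Bc c k := by
  have hs : Summable (fun n : ℕ => ‖((n:ℝ))^1 * (1/2:ℝ)^n‖) :=
    summable_norm_pow_mul_geometric_of_norm_lt_one 1 (by rw [Real.norm_eq_abs]; rw [abs_of_nonneg] <;> norm_num)
  have ht := hs.tendsto_atTop_zero
  have hev : ∀ᶠ k : ℕ in atTop, ‖((k:ℝ))^1 * (1/2:ℝ)^k‖ < c/16 :=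
    ht.eventually_lt_const (by positivity)
  obtain ⟨K0, hK0⟩ := eventually_atTop.1 hev
  refine ⟨max K0 2, le_max_right _ _, ?_⟩
  intro k hk
  have hk2 : 2 ≤ k := le_trans (le_max_right _ _) hk
  have h1 := hK0 k (le_trans (le_max_left _ _) hk)
  rw [Real.norm_eq_abs, abs_of_nonneg (by positivity), pow_one] at h1
  have h16 : 16 * (k:ℝ) < c * 2^k := by
    have h2 : (k:ℝ) * (1/2)^k = k / 2^k := by rw [div_pow, one_pow]; ring
    rw [h2, div_lt_iff₀ (by positivity)] at h1
    nlinarith [pow_pos (two_pos : (0:ℝ) < 2) k]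
  unfold Bc
  have hcast : ((2*k-1:ℕ):ℝ) = 2*(k:ℝ)-1 := by
    rw [Nat.cast_sub (by omega)]; push_cast; ring
  have hden : (0:ℝ) < 2*(k:ℝ)-1 := by
    have : (1:ℝ) ≤ k := by exact_mod_cast Nat.one_le_iff_ne_zero.2 (by omega)
    linarith
  rw [hcast, div_div, le_div_iff₀ (by positivity)]
  set g := (2:ℝ)^(k-1) with hg
  have hgpos : (0:ℝ) < g := by positivity
  have h2k : (2:ℝ)^k = g*2 := by
    rw [hg, ← pow_succ]; congr 1; omega
  have h22k : (2:ℝ)^(2*k-1) = g*(g*2) := by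
    rw [show 2*k-1 = (k-1)+k from by omega, pow_add, h2k, hg]
  rw [h2k, h22k]
  have hkey := mul_lt_mul_of_pos_right h16 hgpos
  rw [h2k] at hkey
  have hk1 : (1:ℝ) ≤ k := by exact_mod_cast Nat.one_le_iff_ne_zero.2 (by omega)
  nlinarith [hgpos, hkey]

lemma ofReal_two_pow (n : ℕ) : (2:ℝ≥0∞)^n = ENNReal.ofReal ((2:ℝ)^n) := by
  rw [ENNReal.ofReal_pow (by norm_num)]
  norm_num

lemma real_of_ofReal_lt {B r : ℝ} {n : ℕ}
    (hB : ENNReal.ofReal B < (2:ℝ≥0∞)^n * ENNReal.ofReal r) : B < 2^n * r := by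
  by_contra h
  push_neg at h
  have : (2:ℝ≥0∞)^n * ENNReal.ofReal r ≤ ENNReal.ofReal B := by
    rw [ofReal_two_pow, ← ENNReal.ofReal_mul (by positivity)]
    exact ENNReal.ofReal_le_ofReal h
  exact absurd hB (not_lt.2 this)

lemma half_pow_le {n m : ℕ} (h : n ≤ m) : ((1:ℝ)/2)^m ≤ (1/2)^n :=
  pow_le_pow_of_le_one (by norm_num) (by norm_num) h

lemma key_k (μ : Measure (ℕ → Bool)) [IsProbabilityMeasure μ]
    (huniform : ∀ x : List Bool, μ (cyl x) = (2 : ℝ≥0∞)⁻¹ ^ x.length)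
    {a : List Bool → ℝ} {c : ℝ} (h0 : ∀ x, 0 ≤ a x) (h1 : ∀ x, a x ≤ 1) (hc : 0 < c)
    {k : ℕ} (hk2 : 2 ≤ k) (hkB : (2:ℝ)^k ≤ Bc c k)
    (hbad : ∀ ω ∈ Ck k, ∃ n : ℕ, Bc c k < 2^n * a (seg ω n)) :
    ∃ W : Set (List Bool),
      (∀ x ∈ W, pat1 k <+: x) ∧
      (∀ x ∈ W, ∀ y ∈ W, x <+: y → x = y) ∧
      ENNReal.ofReal (c / (8*((k:ℝ)+1))) ≤ ∑' x : W, ENNReal.ofReal (a x.1) := by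
  have hBpos : 0 < Bc c k := Bc_pos hc (by omega)
  by_cases hA : ∃ n, n ≤ 2*k ∧ Bc c k < 2^n * a (seg (ωfun k) n)
  · obtain ⟨n, hn2k, hBn⟩ := hA
    have hkn : k < n := by
      by_contra hcon
      push_neg at hcon
      have hle : (2:ℝ)^n * a (seg (ωfun k) n) ≤ 2^k := by
        calc (2:ℝ)^n * a (seg (ωfun k) n) ≤ 2^n * 1 := by
              apply mul_le_mul_of_nonneg_left (h1 _) (by positivity)
          _ = 2^n := mul_one _
          _ ≤ 2^k := pow_le_pow_right₀ one_le_two hcon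
      linarith
    refine ⟨{seg (ωfun k) n}, ?_, ?_, ?_⟩
    · intro x hx
      rw [Set.mem_singleton_iff] at hx
      subst hx
      exact pat1_prefix_seg (ωfun_mem k) (by omega) hkn
    · intro x hx y hy _
      rw [Set.mem_singleton_iff] at hx hy
      rw [hx, hy]
    · rw [show (∑' (x : ↑({seg (ωfun k) n} : Set (List Bool))), ENNReal.ofReal (a ↑x))
          = ENNReal.ofReal (a (seg (ωfun k) n)) from
          tsum_singleton _ (fun y => ENNReal.ofReal (a y))]
      apply ENNReal.ofReal_le_ofReal
      have step1 : Bc c k * (1/2)^n < a (seg (ωfun k) n) := by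
        have hp : (0:ℝ) < (1/2:ℝ)^n := by positivity
        have := mul_lt_mul_of_pos_right hBn hp
        have hcancel : (2:ℝ)^n * ((1/2:ℝ)^n) = 1 := by
          rw [← mul_pow]; norm_num
        calc Bc c k * (1/2)^n < 2^n * a (seg (ωfun k) n) * (1/2)^n := this
          _ = a (seg (ωfun k) n) * ((2:ℝ)^n * (1/2)^n) := by ring
          _ = a (seg (ωfun k) n) := by rw [hcancel, mul_one]
      have step2 : Bc c k * (1/2)^(2*k) ≤ Bc c k * (1/2)^n :=
        mul_le_mul_of_nonneg_left (half_pow_le hn2k) hBpos.le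
      linarith [Bc_tail hc hk2]
  · push_neg at hA
    set S := {x : List Bool | pat k <+: x ∧ 2*k < x.length ∧ Bc c k < 2^x.length * a x} with hSdef
    set M := {x ∈ S | ∀ y ∈ S, y <+: x → y = x} with hMdef
    have hcov : Ck k ⊆ ⋃ x : M, cyl x.1 := by
      intro ω hω
      obtain ⟨n, hn⟩ := hbad ω hω
      have hn2k : 2*k < n := by
        by_contra hcon
        push_neg at hcon
        rw [seg_eq_of_agree hω (ωfun_mem k) hcon] at hn
        exact absurd (hA n hcon) (not_le.2 hn)
      have hS : seg ω n ∈ S := by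
        refine ⟨?_, by rw [seg_length]; exact hn2k, by rw [seg_length]; exact hn⟩
        rw [← show seg ω (2*k) = pat k from hω]
        exact seg_prefix ω (by omega)
      obtain ⟨y, hyS, hyx, hymin⟩ := exists_minimal_prefix S _ hS
      refine Set.mem_iUnion.2 ⟨⟨y, hyS, hymin⟩, ?_⟩
      apply cyl_anti hyx
      rw [mem_cyl_iff, seg_length]
    have hmeas : ((2:ℝ≥0∞)⁻¹)^(2*k) ≤ ∑' x : M, ((2:ℝ≥0∞)⁻¹)^(x.1.length) := by
      calc ((2:ℝ≥0∞)⁻¹)^(2*k) = μ (Ck k) := by rw [Ck_eq_cyl, huniform, pat_length]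
        _ ≤ μ (⋃ x : M, cyl x.1) := measure_mono hcov
        _ ≤ ∑' x : M, μ (cyl x.1) := measure_iUnion_le _
        _ = _ := tsum_congr fun x => by rw [huniform]
    refine ⟨M, ?_, ?_, ?_⟩
    · intro x hx
      exact (pat1_prefix_pat (by omega)).trans hx.1.1
    · intro x hx y hy hxy
      exact hy.2 x hx.1 hxy
    · calc ENNReal.ofReal (c / (8*((k:ℝ)+1)))
          ≤ ENNReal.ofReal (Bc c k * (1/2)^(2*k)) := ENNReal.ofReal_le_ofReal (Bc_tail hc hk2)
        _ = ENNReal.ofReal (Bc c k) * (2⁻¹:ℝ≥0∞)^(2*k) := by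
            rw [ENNReal.ofReal_mul hBpos.le, ofReal_half_pow]
        _ ≤ ENNReal.ofReal (Bc c k) * ∑' x : M, ((2:ℝ≥0∞)⁻¹)^(x.1.length) :=
            mul_le_mul_right hmeas _
        _ = ∑' x : M, ENNReal.ofReal (Bc c k) * ((2:ℝ≥0∞)⁻¹)^(x.1.length) :=
            ENNReal.tsum_mul_left.symm
        _ ≤ ∑' x : M, ENNReal.ofReal (a x.1) := by
            apply ENNReal.tsum_le_tsum
            intro x
            rw [← ofReal_half_pow, ← ENNReal.ofReal_mul hBpos.le]
            apply ENNReal.ofReal_le_ofReal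
            obtain ⟨⟨-, -, hxB⟩, -⟩ := x.2
            have hp : (0:ℝ) < (1/2:ℝ)^(x.1.length) := by positivity
            have hcancel : (2:ℝ)^(x.1.length) * ((1/2:ℝ)^(x.1.length)) = 1 := by
              rw [← mul_pow]; norm_num
            have := mul_lt_mul_of_pos_right hxB hp
            calc Bc c k * (1/2)^(x.1.length) ≤ 2^(x.1.length) * a x.1 * (1/2)^(x.1.length) :=
                this.le
              _ = a x.1 * ((2:ℝ)^(x.1.length) * (1/2)^(x.1.length)) := by ring
              _ = a x.1 := by rw [hcancel, mul_one]

lemma partII (μ : Measure (ℕ → Bool)) [IsProbabilityMeasure μ]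
    (huniform : ∀ x : List Bool, μ (cyl x) = (2 : ℝ≥0∞)⁻¹ ^ x.length) :
    ∀ a : List Bool → ℝ, IsSemimeasureBound a → ∀ c : ℝ, 0 < c →
      ∃ ω : ℕ → Bool, 2 < gU ω ∧
        (⨆ n : ℕ, (2 : ℝ≥0∞) ^ n * ENNReal.ofReal (a (seg ω n))) <
          ENNReal.ofReal (c * gU ω / Real.logb 2 (gU ω)) := by
  intro a ha c hc
  by_contra hcon
  push_neg at hcon
  obtain ⟨K1, hK12, hK1B⟩ := exists_K1 hc
  have h0 := ha.1
  have h1 := a_le_one ha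
  have hbad : ∀ k, K1 ≤ k → ∀ ω ∈ Ck k, ∃ n : ℕ, Bc c k < 2^n * a (seg ω n) := by
    intro k hk ω hω
    have hk2 : 2 ≤ k := le_trans hK12 hk
    have hg2 : 2 < gU ω := two_lt_gU hk2 hω
    have hsup := hcon ω hg2
    rw [rhs_eq (by omega) hω] at hsup
    have hT : 0 < c * 2^(2*k-1) / ((2*k-1:ℕ):ℝ) :=
      lt_trans (Bc_pos hc (by omega)) (Bc_lt_T hc (by omega))
    have hlt : ENNReal.ofReal (Bc c k) < ⨆ n : ℕ, (2:ℝ≥0∞)^n * ENNReal.ofReal (a (seg ω n)) :=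
      lt_of_lt_of_le ((ENNReal.ofReal_lt_ofReal_iff hT).2 (Bc_lt_T hc (by omega))) hsup
    obtain ⟨n, hn⟩ := lt_iSup_iff.mp hlt
    exact ⟨n, real_of_ofReal_lt hn⟩
  have key : ∀ k : ℕ, ∃ W : Set (List Bool),
      (∀ x ∈ W, pat1 k <+: x) ∧
      (∀ x ∈ W, ∀ y ∈ W, x <+: y → x = y) ∧
      (K1 ≤ k → ENNReal.ofReal (c / (8*((k:ℝ)+1))) ≤ ∑' x : W, ENNReal.ofReal (a x.1)) := by
    intro k
    by_cases hk : K1 ≤ k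
    · obtain ⟨W, p1, p2, p3⟩ :=
        key_k μ huniform h0 h1 hc (le_trans hK12 hk) (hK1B k hk) (hbad k hk)
      exact ⟨W, p1, p2, fun _ => p3⟩
    · exact ⟨∅, by simp, by simp, fun h => absurd h hk⟩
  choose Wf hW1 hW2 hW3 using key
  obtain ⟨N, hNge, hN1⟩ : ∃ N, (16/c + ∑ i ∈ Finset.range K1, (1:ℝ)/(i+1)
        ≤ ∑ i ∈ Finset.range N, (1:ℝ)/(i+1)) ∧ K1 ≤ N := by
    have h := Real.tendsto_sum_range_one_div_nat_succ_atTop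
    exact ((h.eventually_ge_atTop _).and (eventually_ge_atTop K1)).exists
  set F := Finset.Ico K1 N with hF
  have hFsum : 1 < ∑ k ∈ F, c/(8*((k:ℝ)+1)) := by
    have hsub : ∑ k ∈ F, (1:ℝ)/(k+1)
        = ∑ i ∈ Finset.range N, (1:ℝ)/(i+1) - ∑ i ∈ Finset.range K1, (1:ℝ)/(i+1) :=
      Finset.sum_Ico_eq_sub _ hN1
    have hIco : 16/c ≤ ∑ k ∈ F, (1:ℝ)/(k+1) := by rw [hsub]; linarith
    have heq : ∑ k ∈ F, c/(8*((k:ℝ)+1)) = (c/8) * ∑ k ∈ F, (1:ℝ)/(k+1) := by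
      rw [Finset.mul_sum]
      apply Finset.sum_congr rfl
      intro k _
      rw [mul_one_div, div_div]
    rw [heq]
    calc (1:ℝ) < (c/8) * (16/c) := by
          rw [div_mul_div_comm, lt_div_iff₀ (by positivity)]
          nlinarith
      _ ≤ (c/8) * ∑ k ∈ F, (1:ℝ)/(k+1) := by
          apply mul_le_mul_of_nonneg_left hIco (by positivity)
  set W : Set (List Bool) := ⋃ k ∈ F, Wf k with hWdef
  have hWpf : PrefixFree W := by
    intro x hx y hy hxy
    simp only [hWdef, Set.mem_iUnion] at hx hy
    obtain ⟨j, hjF, hxj⟩ := hx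
    obtain ⟨l, hlF, hyl⟩ := hy
    have hjl : j = l := pat1_unique ((hW1 j x hxj).trans hxy) (hW1 l y hyl)
    subst hjl
    exact hW2 j x hxj y hyl hxy
  have hle1 := ha.2 W hWpf
  have hpoint : ∀ x : List Bool,
      (∑ k ∈ F, Set.indicator (Wf k) (fun y => ENNReal.ofReal (a y)) x)
        ≤ Set.indicator W (fun y => ENNReal.ofReal (a y)) x := by
    intro x
    by_cases hx : x ∈ W
    · have hx' := hx
      simp only [hWdef, Set.mem_iUnion] at hx'
      obtain ⟨k0, hk0F, hk0⟩ := hx'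
      rw [Set.indicator_of_mem hx,
        Finset.sum_eq_single_of_mem k0 hk0F (fun b _ hb => Set.indicator_of_notMem
          (fun hxb => hb (pat1_unique (hW1 b x hxb) (hW1 k0 x hk0))) _),
        Set.indicator_of_mem hk0]
    · have hz : ∀ k ∈ F, Set.indicator (Wf k) (fun y => ENNReal.ofReal (a y)) x = 0 := by
        intro k hkF
        apply Set.indicator_of_notMem
        intro hxk
        exact hx (by exact Set.mem_iUnion.2 ⟨k, Set.mem_iUnion.2 ⟨hkF, hxk⟩⟩)
      rw [Finset.sum_congr rfl hz, Set.indicator_of_notMem hx]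
      simp
  have hge : (∑ k ∈ F, ENNReal.ofReal (c/(8*((k:ℝ)+1))))
      ≤ ∑' x : W, ENNReal.ofReal (a x.1) := by
    calc ∑ k ∈ F, ENNReal.ofReal (c/(8*((k:ℝ)+1)))
        ≤ ∑ k ∈ F, ∑' x : (Wf k), ENNReal.ofReal (a x.1) := by
          apply Finset.sum_le_sum
          intro k hkF
          exact hW3 k (Finset.mem_Ico.1 hkF).1
      _ = ∑ k ∈ F, ∑' x : List Bool, Set.indicator (Wf k) (fun y => ENNReal.ofReal (a y)) x := by
          apply Finset.sum_congr rfl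
          intro k _
          exact tsum_subtype (Wf k) (fun y => ENNReal.ofReal (a y))
      _ = ∑' x : List Bool, ∑ k ∈ F, Set.indicator (Wf k) (fun y => ENNReal.ofReal (a y)) x :=
          (Summable.tsum_finsetSum (fun i _ => ENNReal.summable)).symm
      _ ≤ ∑' x : List Bool, Set.indicator W (fun y => ENNReal.ofReal (a y)) x :=
          ENNReal.tsum_le_tsum hpoint
      _ = ∑' x : W, ENNReal.ofReal (a x.1) :=
          (tsum_subtype W (fun y => ENNReal.ofReal (a y))).symm
  have hofr : (1:ℝ≥0∞) < ∑ k ∈ F, ENNReal.ofReal (c/(8*((k:ℝ)+1))) := by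
    rw [← ENNReal.ofReal_sum_of_nonneg (fun k _ => by positivity)]
    rw [← ENNReal.ofReal_one]
    exact (ENNReal.ofReal_lt_ofReal_iff (by linarith)).2 hFsum
  exact absurd hle1 (not_le.2 (lt_of_lt_of_le hofr hge))

/-- uniform-measure case of Theorem 2. For the uniform measure `μ`
on the Cantor space (`μ([x]) = 2^(−|x|)`), the function `gU` is probability bounded,
and for every semimeasure bound `a` and every `c > 0` there is an `ω` with `gU ω > 2`
and `sup_n 2^n · a(ω|n) < c · gU ω / log₂ (gU ω)`. -/
theorem stmt15 (μ : Measure (ℕ → Bool)) [IsProbabilityMeasure μ]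
    (huniform : ∀ x : List Bool, μ (cyl x) = (2 : ℝ≥0∞)⁻¹ ^ x.length) :
    (∀ C : ℝ, 0 < C → μ {ω | C < gU ω} ≤ ENNReal.ofReal (1 / C)) ∧
    ∀ a : List Bool → ℝ, IsSemimeasureBound a → ∀ c : ℝ, 0 < c →
      ∃ ω : ℕ → Bool, 2 < gU ω ∧
        (⨆ n : ℕ, (2 : ℝ≥0∞) ^ n * ENNReal.ofReal (a (seg ω n))) <
          ENNReal.ofReal (c * gU ω / Real.logb 2 (gU ω)) :=
  ⟨partI μ huniform, partII μ huniform⟩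
end
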